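/- The formulas ξ_n · a_{10} = e^{(i/p)[α + λn + λq(p+1)/2]} ξ_{n+q} and ξ_n · a_{01} = ξ_{n−p} (for p ≠ 0), respectively ξ_n · a_{10} = ξ_{n+q} and ξ_n · a_{01} = e^{(i/q)[α + λn]} ξ_n (for p = 0, q ≠ 0), define a right A-module structure T^α_{pq} on the vector space with basis {ξ_n : n ∈ ℤ}, i.e. they are compatible with the relation a_{10} a_{01} = e^{iλ} a_{01} a_{10}. -/

import Mathlib

/-- The action of the generator `a_{10}` on the module `T^α_{pq}` with basis
`{ξ_n : n ∈ ℤ}` (realized as `ℤ →₀ ℂ`):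
`ξ_n ↦ e^{(i/p)[α + λn + λq(p+1)/2]} ξ_{n+q}` for `p ≠ 0`, and `ξ_n ↦ ξ_{n+q}` for `p = 0`. -/
noncomputable def Uop (lam α : ℝ) (p q : ℤ) : (ℤ →₀ ℂ) →ₗ[ℂ] (ℤ →₀ ℂ) :=
  Finsupp.lsum ℂ fun n => LinearMap.toSpanSingleton ℂ (ℤ →₀ ℂ)
    (Finsupp.single (n + q)
      (if p = 0 then 1 else
        Complex.exp (Complex.I *
          ((α + lam * n + lam * q * ((p : ℝ) + 1) / 2) / (p : ℝ)))))

/-- The action of the generator `a_{01}` on the module `T^α_{pq}`: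
`ξ_n ↦ ξ_{n-p}` for `p ≠ 0`, and `ξ_n ↦ e^{(i/q)[α + λn]} ξ_n` for `p = 0`. -/
noncomputable def Vop (lam α : ℝ) (p q : ℤ) : (ℤ →₀ ℂ) →ₗ[ℂ] (ℤ →₀ ℂ) :=
  Finsupp.lsum ℂ fun n => LinearMap.toSpanSingleton ℂ (ℤ →₀ ℂ)
    (if p = 0 then Finsupp.single n (Complex.exp (Complex.I * ((α + lam * n) / (q : ℝ))))
     else Finsupp.single (n - p) 1)

/-!
Both `V ∘ U` and `U ∘ V` send `ξ_n` to a multiple of the same basis vector, so the relation is an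
identity between phases. For `p ≠ 0` the phase of `U` is affine in `n` with slope `λ/p`, and `V`
shifts the index by `-p`; for `p = 0` the diagonal phase of `V` has slope `λ/q`, and `U` shifts
the index by `q`. Either way the shift changes the phase by exactly `e^{iλ}`.
-/

open Complex

noncomputable def uCoeff (lam α : ℝ) (p q n : ℤ) : ℂ :=
  exp (I * ((α + lam * n + lam * q * ((p : ℝ) + 1) / 2) / (p : ℝ)))

noncomputable def vCoeff (lam α : ℝ) (q n : ℤ) : ℂ :=
  exp (I * ((α + lam * n) / (q : ℝ)))

theorem exp_I_mul_div_add_shift (lam b : ℝ) {m : ℝ} (hm : m ≠ 0) (x : ℝ) :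
    exp (I * ((b + lam * (x + m)) / m)) = exp (I * lam) * exp (I * ((b + lam * x) / m)) := by
  rw [← exp_add]
  congr 1
  have hm' : (m : ℂ) ≠ 0 := ofReal_ne_zero.mpr hm
  field_simp
  ring

section

variable (lam α : ℝ) {p q : ℤ}

theorem uCoeff_add_self (hp : p ≠ 0) (n : ℤ) :
    uCoeff lam α p q (n + p) = exp (I * lam) * uCoeff lam α p q n := by
  have hp' : (p : ℝ) ≠ 0 := Int.cast_ne_zero.mpr hp
  have := exp_I_mul_div_add_shift lam (α + lam * q * ((p : ℝ) + 1) / 2) hp' n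
  simp only [uCoeff]
  convert this using 4 <;> push_cast <;> ring

theorem vCoeff_add_self (hq : q ≠ 0) (n : ℤ) :
    vCoeff lam α q (n + q) = exp (I * lam) * vCoeff lam α q n := by
  have hq' : (q : ℝ) ≠ 0 := Int.cast_ne_zero.mpr hq
  simpa only [vCoeff, Int.cast_add, ofReal_intCast] using exp_I_mul_div_add_shift lam α hq' n

variable (n : ℤ) (c : ℂ)

theorem Uop_single (hp : p ≠ 0) :
    Uop lam α p q (Finsupp.single n c) = Finsupp.single (n + q) (c * uCoeff lam α p q n) := by
  rw [Uop, Finsupp.lsum_single, LinearMap.toSpanSingleton_apply, Finsupp.smul_single,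
    smul_eq_mul, if_neg hp, uCoeff]

theorem Uop_zero_single : Uop lam α 0 q (Finsupp.single n c) = Finsupp.single (n + q) c := by
  rw [Uop, Finsupp.lsum_single, LinearMap.toSpanSingleton_apply, Finsupp.smul_single,
    smul_eq_mul, if_pos rfl, mul_one]

theorem Vop_single (hp : p ≠ 0) :
    Vop lam α p q (Finsupp.single n c) = Finsupp.single (n - p) c := by
  rw [Vop, Finsupp.lsum_single, LinearMap.toSpanSingleton_apply, if_neg hp,
    Finsupp.smul_single, smul_eq_mul, mul_one]

theorem Vop_zero_single :
    Vop lam α 0 q (Finsupp.single n c) = Finsupp.single n (c * vCoeff lam α q n) := by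
  rw [Vop, Finsupp.lsum_single, LinearMap.toSpanSingleton_apply, if_pos rfl,
    Finsupp.smul_single, smul_eq_mul, vCoeff]

end

theorem Vop_comp_Uop (lam α : ℝ) {p : ℤ} (q : ℤ) (hp : p ≠ 0) :
    Vop lam α p q ∘ₗ Uop lam α p q = exp (I * lam) • (Uop lam α p q ∘ₗ Vop lam α p q) := by
  refine Finsupp.lhom_ext fun n c => ?_
  have hcoeff := uCoeff_add_self lam α (q := q) hp (n - p)
  rw [sub_add_cancel] at hcoeff
  simp only [LinearMap.comp_apply, LinearMap.smul_apply, Uop_single _ _ _ _ hp,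
    Vop_single _ _ _ _ hp, Finsupp.smul_single, smul_eq_mul, hcoeff, sub_add_comm]
  ring_nf

theorem Vop_zero_comp_Uop_zero (lam α : ℝ) {q : ℤ} (hq : q ≠ 0) :
    Vop lam α 0 q ∘ₗ Uop lam α 0 q = exp (I * lam) • (Uop lam α 0 q ∘ₗ Vop lam α 0 q) := by
  refine Finsupp.lhom_ext fun n c => ?_
  simp only [LinearMap.comp_apply, LinearMap.smul_apply, Uop_zero_single, Vop_zero_single,
    Finsupp.smul_single, smul_eq_mul, vCoeff_add_self lam α hq]
  ring_nf

theorem Tmodule_welldefined (lam α : ℝ) (p q : ℤ) (hpq : p ≠ 0 ∨ q ≠ 0) :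
    (p ≠ 0 → ∀ n : ℤ,
      Uop lam α p q (Finsupp.single n 1) =
        Finsupp.single (n + q)
          (Complex.exp (Complex.I *
            ((α + lam * n + lam * q * ((p : ℝ) + 1) / 2) / (p : ℝ)))) ∧
      Vop lam α p q (Finsupp.single n 1) = Finsupp.single (n - p) 1) ∧
    (p = 0 → ∀ n : ℤ,
      Uop lam α p q (Finsupp.single n 1) = Finsupp.single (n + q) 1 ∧
      Vop lam α p q (Finsupp.single n 1) =
        Finsupp.single n (Complex.exp (Complex.I * ((α + lam * n) / (q : ℝ))))) ∧
    Vop lam α p q ∘ₗ Uop lam α p q =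
      Complex.exp (Complex.I * lam) • (Uop lam α p q ∘ₗ Vop lam α p q) := by
  refine ⟨fun hp n => ⟨?_, Vop_single lam α n 1 hp⟩, fun hp n => ?_, ?_⟩
  · rw [Uop_single lam α n 1 hp, one_mul, uCoeff]
  · subst hp
    exact ⟨Uop_zero_single lam α n 1, by rw [Vop_zero_single, one_mul, vCoeff]⟩
  · rcases eq_or_ne p 0 with rfl | hp
    · exact Vop_zero_comp_Uop_zero lam α (hpq.resolve_left (not_not.mpr rfl))
    · exact Vop_comp_Uop lam α q hp
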